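/- arXiv:math/0012156 — 5 statements merged into one kernel-verified Lean document; each statement's English description precedes it below -/
import Mathlib

section
/- Let E be a field of characteristic p, V a finite-dimensional F_p-representation of G_E. Then the fixed points V^{G_E} are isomorphic as F_p-vector spaces to the φ-fixed points D(V)^{φ=1} of the associated étale Φ-module D(V). -/
open TensorProduct

open Polynomial in
lemma pow_card_eq_algebraMap {p : ℕ} [Fact p.Prime] {Esep : Type} [Field Esep]
    [Algebra (ZMod p) Esep] {a : Esep} (h : a ^ p = a) :
    ∃ c : ZMod p, algebraMap (ZMod p) Esep c = a := by
  classical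
  set f : Esep[X] := X ^ p - X with hf
  have hp1 : 1 < p := (Fact.out : p.Prime).one_lt
  have hf0 : f ≠ 0 := FiniteField.X_pow_card_sub_X_ne_zero Esep hp1
  have hroot : ∀ x : Esep, x ^ p = x → x ∈ f.roots.toFinset := by
    intro x hx
    rw [Multiset.mem_toFinset, mem_roots hf0]
    simp [hf, IsRoot.def, hx]
  set s : Finset Esep := Finset.univ.image (algebraMap (ZMod p) Esep) with hs
  have hsub : s ⊆ f.roots.toFinset := by
    intro x hx
    rw [hs, Finset.mem_image] at hx
    obtain ⟨c, -, rfl⟩ := hx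
    exact hroot _ (by rw [← map_pow, ZMod.pow_card])
  have hscard : s.card = p := by
    rw [hs, Finset.card_image_of_injective _ (algebraMap (ZMod p) Esep).injective]
    simp [ZMod.card]
  have hcard : f.roots.toFinset.card ≤ p := by
    calc f.roots.toFinset.card ≤ Multiset.card f.roots := Multiset.toFinset_card_le _
    _ ≤ f.natDegree := Polynomial.card_roots' f
    _ = p := FiniteField.X_pow_card_sub_X_natDegree_eq Esep hp1
  have heq : s = f.roots.toFinset := Finset.eq_of_subset_of_card_le hsub (hscard ▸ hcard)
  have : a ∈ s := heq ▸ hroot a h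
  rw [hs, Finset.mem_image] at this
  obtain ⟨c, -, hc⟩ := this
  exact ⟨c, hc⟩

/-- The absolute Frobenius `σ(x) = x^p` of a field of characteristic `p`,
as an `𝔽_p`-linear map. -/
noncomputable def frobLinear (Esep : Type) (p : ℕ) [Fact p.Prime] [Field Esep]
    [CharP Esep p] [Algebra (ZMod p) Esep] : Esep →ₗ[ZMod p] Esep where
  toFun := frobenius Esep p
  map_add' x y := map_add _ x y
  map_smul' c x := by
    simp only [RingHom.id_apply, Algebra.smul_def, map_mul]
    congr 1
    rw [frobenius_def, ← map_pow, ZMod.pow_card]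

/-- **`H^0` via Φ-modules.** Let `E` be a field of characteristic `p`, `Esep` a separable
closure, `G = Gal(Esep/E)`, and `V` a finite dimensional `𝔽_p`-representation of `G`.
Then the fixed points `V^{G}` are isomorphic as `𝔽_p`-vector spaces to the `φ`-fixed
points `D(V)^{φ=1}` of the étale Φ-module `D(V) = (Esep ⊗_{𝔽_p} V)^{G}`, where the
Frobenius `φ` is induced by `σ ⊗ id_V`. -/
theorem fixedPoints_equiv_phi_fixedPoints_of_D {p : ℕ} [Fact p.Prime]
    (E Esep : Type) [Field E] [Field Esep] [Algebra E Esep] [IsSepClosure E Esep]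
    [CharP E p] [CharP Esep p]
    [Algebra (ZMod p) E] [Algebra (ZMod p) Esep] [IsScalarTower (ZMod p) E Esep]
    (V : Type) [AddCommGroup V] [Module (ZMod p) V] [FiniteDimensional (ZMod p) V]
    [TopologicalSpace V] [DiscreteTopology V]
    (ρ : (Esep ≃ₐ[E] Esep) →* (V ≃ₗ[ZMod p] V))
    (hcont : Continuous fun x : (Esep ≃ₐ[E] Esep) × V => ρ x.1 x.2)
    -- the invariants `D(V) = (Esep ⊗ V)^G`, an `E`-subspace of `Esep ⊗[𝔽_p] V`
    (D : Submodule E (Esep ⊗[ZMod p] V))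
    (hD : D = ⨅ g : Esep ≃ₐ[E] Esep,
        LinearMap.eqLocus
          (TensorProduct.AlgebraTensorModule.map
            (g.toLinearMap : Esep →ₗ[E] Esep)
            ((ρ g : V ≃ₗ[ZMod p] V) : V →ₗ[ZMod p] V))
          (LinearMap.id : Esep ⊗[ZMod p] V →ₗ[E] Esep ⊗[ZMod p] V))
    -- the Frobenius `φ = σ ⊗ id_V` on `Esep ⊗[𝔽_p] V`
    (Φ : Esep ⊗[ZMod p] V →ₗ[ZMod p] Esep ⊗[ZMod p] V)
    (hΦ : Φ = TensorProduct.map (frobLinear Esep p) (LinearMap.id : V →ₗ[ZMod p] V)) :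
    Nonempty
      ((↥(⨅ g : Esep ≃ₐ[E] Esep,
            LinearMap.eqLocus ((ρ g : V ≃ₗ[ZMod p] V) : V →ₗ[ZMod p] V)
              (LinearMap.id : V →ₗ[ZMod p] V)))
        ≃ₗ[ZMod p]
       ↥(D.restrictScalars (ZMod p) ⊓
          LinearMap.eqLocus Φ (LinearMap.id : Esep ⊗[ZMod p] V →ₗ[ZMod p] Esep ⊗[ZMod p] V))) := by
  classical
  set b := Module.finBasis (ZMod p) V with hb
  set bE := Algebra.TensorProduct.basis Esep b with hbE
  -- injectivity of `v ↦ 1 ⊗ v`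
  have hinj : ∀ v : V, (1 : Esep) ⊗ₜ[ZMod p] v = 0 → v = 0 := by
    intro v hv
    have h1 : bE.repr ((1 : Esep) ⊗ₜ[ZMod p] v) = 0 := by rw [hv, map_zero]
    rw [hbE, Algebra.TensorProduct.basis_repr_tmul, one_smul] at h1
    have h3 : b.repr v = 0 := by
      ext i
      have := DFunLike.congr_fun h1 i
      simp only [Finsupp.mapRange_apply, Finsupp.coe_zero, Pi.zero_apply] at this
      exact (algebraMap (ZMod p) Esep).injective (by simpa using this)
    exact b.repr.map_eq_zero_iff.mp h3
  set f : V →ₗ[ZMod p] Esep ⊗[ZMod p] V := TensorProduct.mk (ZMod p) Esep V 1 with hfdef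
  set S := ⨅ g : Esep ≃ₐ[E] Esep,
      LinearMap.eqLocus ((ρ g : V ≃ₗ[ZMod p] V) : V →ₗ[ZMod p] V)
        (LinearMap.id : V →ₗ[ZMod p] V) with hS
  set T := D.restrictScalars (ZMod p) ⊓
      LinearMap.eqLocus Φ (LinearMap.id : Esep ⊗[ZMod p] V →ₗ[ZMod p] Esep ⊗[ZMod p] V) with hT
  have hmemS : ∀ v : V, v ∈ S ↔ ∀ g : Esep ≃ₐ[E] Esep, ρ g v = v := by
    intro v
    simp [hS, Submodule.mem_iInf, LinearMap.mem_eqLocus]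
  have hmap : ∀ v ∈ S, f v ∈ T := by
    intro v hv
    rw [hmemS] at hv
    refine Submodule.mem_inf.mpr ⟨?_, ?_⟩
    · rw [Submodule.restrictScalars_mem, hD, Submodule.mem_iInf]
      intro g
      rw [LinearMap.mem_eqLocus]
      simp [hfdef, TensorProduct.AlgebraTensorModule.map_tmul, hv g]
    · rw [LinearMap.mem_eqLocus, hΦ]
      simp [hfdef, TensorProduct.map_tmul, frobLinear, frobenius_def]
  have hsurj : ∀ x ∈ T, ∃ v ∈ S, f v = x := by
    intro x hx
    obtain ⟨hxD, hxΦ⟩ := Submodule.mem_inf.mp hx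
    rw [Submodule.restrictScalars_mem] at hxD
    rw [LinearMap.mem_eqLocus] at hxΦ
    set a : Fin (Module.finrank (ZMod p) V) → Esep := fun i => bE.repr x i with ha
    have hxsum : x = ∑ i, a i ⊗ₜ[ZMod p] b i := by
      conv_lhs => rw [← bE.sum_repr x]
      refine Finset.sum_congr rfl fun i _ => ?_
      rw [ha, hbE, Algebra.TensorProduct.basis_repr_symm_apply']
    have hΦx : Φ x = ∑ i, (a i ^ p) ⊗ₜ[ZMod p] b i := by
      rw [hΦ]
      conv_lhs => rw [hxsum]
      rw [map_sum]
      refine Finset.sum_congr rfl fun i _ => ?_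
      simp [TensorProduct.map_tmul, frobLinear, frobenius_def]
    have hfix : ∀ i, a i ^ p = a i := by
      have h1 : (∑ j, (a j ^ p) • bE j) = ∑ j, a j • bE j := by
        calc (∑ j, (a j ^ p) • bE j) = ∑ j, (a j ^ p) ⊗ₜ[ZMod p] b j :=
              Finset.sum_congr rfl fun j _ => by
                rw [hbE, Algebra.TensorProduct.basis_repr_symm_apply']
          _ = Φ x := hΦx.symm
          _ = x := hxΦ
          _ = ∑ j, a j ⊗ₜ[ZMod p] b j := hxsum
          _ = ∑ j, a j • bE j :=
              (Finset.sum_congr rfl fun j _ => by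
                rw [hbE, Algebra.TensorProduct.basis_repr_symm_apply']).symm
      have h2 : (fun j => a j ^ p) = a := by
        rw [← bE.repr_sum_self fun j => a j ^ p, h1, bE.repr_sum_self]
      exact fun i => congrFun h2 i
    choose c hc using fun i => pow_card_eq_algebraMap (hfix i)
    set v : V := ∑ i, c i • b i with hv
    have hfv : f v = x := by
      rw [hfdef, hv]
      simp only [TensorProduct.mk_apply]
      rw [tmul_sum, hxsum]
      refine Finset.sum_congr rfl fun i _ => ?_
      rw [tmul_smul, TensorProduct.smul_tmul', ← hc i, Algebra.smul_def, mul_one]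
    refine ⟨v, ?_, hfv⟩
    rw [hmemS]
    intro g
    have hxD' : (TensorProduct.AlgebraTensorModule.map
        (g.toLinearMap : Esep →ₗ[E] Esep)
        ((ρ g : V ≃ₗ[ZMod p] V) : V →ₗ[ZMod p] V)) x = x := by
      rw [hD, Submodule.mem_iInf] at hxD
      exact hxD g
    rw [← hfv] at hxD'
    simp only [hfdef, TensorProduct.mk_apply, TensorProduct.AlgebraTensorModule.map_tmul,
      AlgEquiv.toLinearMap_apply, map_one, LinearEquiv.coe_coe] at hxD'
    have : (1 : Esep) ⊗ₜ[ZMod p] (ρ g v - v) = 0 := by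
      rw [tmul_sub, hxD', sub_self]
    have := hinj _ this
    rwa [sub_eq_zero] at this
  refine ⟨LinearEquiv.ofBijective (f.restrict hmap) ⟨?_, ?_⟩⟩
  · intro ⟨v, hvS⟩ ⟨w, hwS⟩ h
    have : f v = f w := congrArg Subtype.val h
    have : (1 : Esep) ⊗ₜ[ZMod p] (v - w) = 0 := by
      rw [tmul_sub]
      simpa [hfdef, sub_eq_zero] using this
    have hvw := hinj _ this
    exact Subtype.ext (by rwa [sub_eq_zero] at hvw)
  · rintro ⟨x, hx⟩
    obtain ⟨v, hvS, hfv⟩ := hsurj x hx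
    exact ⟨⟨v, hvS⟩, Subtype.ext hfv⟩
end

section
/- Let E be a field of characteristic p and (M, φ_M) a finite-dimensional E-vector space with a σ-semilinear Frobenius φ_M whose image spans M over E (an étale Φ-module). For any m ∈ M, define N := M ⊕ E·t with φ_N extending φ_M σ-semilinearly by φ_N(t) = t + m. Then (N, φ_N) is again an étale Φ-module, the inclusion u: M → N is a morphism of Φ-modules, and the class of m in M/(φ_M − 1)M maps to zero in N/(φ_N − 1)N. -/
/-!
The image of the extended Frobenius contains `φ(M)`, which spans `M`, and `φ t = t + m`, so it
spans `N = M ⊕ E·t`; and `t` is a preimage of `m` under `φ − 1`, so the class of `m` dies.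
-/

namespace SemilinearMap

variable {R M : Type*} [CommRing R] [AddCommGroup M] [Module R M] {σ : R →+* R}

/-- The Frobenius of `M ⊕ R·t`, with `t = (0, 1)`, extending `φ` by `φ t = t + m`. -/
def extension (φ : M →ₛₗ[σ] M) (m : M) : M × R →ₛₗ[σ] M × R where
  toFun q := (φ q.1 + σ q.2 • m, σ q.2)
  map_add' q r := by
    ext
    · simp only [Prod.fst_add, Prod.snd_add, map_add, add_smul]
      abel
    · simp only [Prod.snd_add, map_add]
  map_smul' c q := by
    ext
    · simp only [Prod.smul_fst, Prod.smul_snd, smul_eq_mul, map_smulₛₗ, map_mul, mul_smul,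
        smul_add]
    · simp only [Prod.smul_snd, smul_eq_mul, map_mul]

variable (φ : M →ₛₗ[σ] M) (m : M)

@[simp]
theorem extension_apply (q : M × R) : extension φ m q = (φ q.1 + σ q.2 • m, σ q.2) := rfl

theorem extension_inl (x : M) : extension φ m (x, 0) = (φ x, 0) := by
  simp

theorem extension_zero_one_sub_self : extension φ m (0, 1) - (0, 1) = (m, 0) := by
  simp

theorem span_range_extension (hφ : Submodule.span R (Set.range φ) = ⊤) :
    Submodule.span R (Set.range (extension φ m)) = ⊤ := by
  have hinl :
      LinearMap.range (LinearMap.inl R M R) ≤ Submodule.span R (Set.range (extension φ m)) := by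
    rw [LinearMap.range_eq_map, ← hφ, ← Submodule.span_image]
    refine Submodule.span_mono ?_
    rintro _ ⟨_, ⟨x, rfl⟩, rfl⟩
    exact ⟨(x, 0), extension_inl φ m x⟩
  have ht : ((m, 1) : M × R) ∈ Submodule.span R (Set.range (extension φ m)) :=
    Submodule.subset_span ⟨(0, 1), by simp⟩
  refine eq_top_iff.2 fun ⟨x, c⟩ _ => ?_
  have hdecomp : ((x, c) : M × R) = LinearMap.inl R M R (x - c • m) + c • (m, 1) := by
    ext <;> simp
  rw [hdecomp]
  exact add_mem (hinl ⟨_, rfl⟩) (Submodule.smul_mem _ c ht)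

end SemilinearMap

theorem etale_phi_module_effaceability_general {p : ℕ} [Fact p.Prime]
    (E : Type) [Field E] [CharP E p]
    (M : Type) [AddCommGroup M] [Module E M]
    (φM : M → M)
    (hadd : ∀ x y, φM (x + y) = φM x + φM y)
    (hsemi : ∀ (c : E) (x : M), φM (c • x) = c ^ p • φM x)
    (hetale : Submodule.span E (Set.range φM) = ⊤)
    (m : M)
    (φN : M × E → M × E)
    (hφN : φN = fun q => (φM q.1 + q.2 ^ p • m, q.2 ^ p)) :
    (∀ q r, φN (q + r) = φN q + φN r) ∧
    (∀ (c : E) (q : M × E), φN (c • q) = c ^ p • φN q) ∧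
    Submodule.span E (Set.range φN) = ⊤ ∧
    (∀ x : M, φN (x, 0) = (φM x, 0)) ∧
    Function.Injective (fun x : M => ((x, 0) : M × E)) ∧
    ∃ n : M × E, φN n - n = (m, 0) := by
  let Φ : M →ₛₗ[frobenius E p] M :=
    { toFun := φM
      map_add' := hadd
      map_smul' := fun c x => by rw [frobenius_def]; exact hsemi c x }
  obtain rfl : φN = SemilinearMap.extension Φ m := by
    funext q
    simp [hφN, Φ, frobenius_def]
  refine ⟨map_add _, fun c q => by rw [map_smulₛₗ, frobenius_def],
    SemilinearMap.span_range_extension Φ m hetale, SemilinearMap.extension_inl Φ m,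
    Prod.mk_left_injective 0, ⟨(0, 1), SemilinearMap.extension_zero_one_sub_self Φ m⟩⟩

/-- **Effaceability of `H^1` for étale Φ-modules.**
Let `E` be a field of characteristic `p` and `(M, φM)` an étale Φ-module over `E`:
a finite dimensional `E`-vector space with an additive `σ`-semilinear Frobenius
(`φM (c • x) = c^p • φM x`) whose image spans `M` over `E`. Fix `m ∈ M` and let
`N := M ⊕ E·t` (realized as `M × E` with `t = (0,1)`), with `φN` extending `φM`
`σ`-semilinearly by `φN t = t + m`, i.e. `φN (x, c) = (φM x + c^p • m, c^p)`.
Then `(N, φN)` is again an étale Φ-module, the inclusion `u : M → N` is an injective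
morphism of Φ-modules, and the class of `m` in `M/(φM − 1)M` maps to zero in
`N/(φN − 1)N`, i.e. `(m, 0)` lies in the image of `φN − 1`. -/
theorem etale_phi_module_effaceability {p : ℕ} [Fact p.Prime]
    (E : Type) [Field E] [CharP E p]
    (M : Type) [AddCommGroup M] [Module E M] [FiniteDimensional E M]
    (φM : M → M)
    (hadd : ∀ x y, φM (x + y) = φM x + φM y)
    (hsemi : ∀ (c : E) (x : M), φM (c • x) = c ^ p • φM x)
    (hetale : Submodule.span E (Set.range φM) = ⊤)
    (m : M)
    (φN : M × E → M × E)
    (hφN : φN = fun q => (φM q.1 + q.2 ^ p • m, q.2 ^ p)) :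
    (∀ q r, φN (q + r) = φN q + φN r) ∧
    (∀ (c : E) (q : M × E), φN (c • q) = c ^ p • φN q) ∧
    Submodule.span E (Set.range φN) = ⊤ ∧
    (∀ x : M, φN (x, 0) = (φM x, 0)) ∧
    Function.Injective (fun x : M => ((x, 0) : M × E)) ∧
    ∃ n : M × E, φN n - n = (m, 0) :=
  etale_phi_module_effaceability_general E M φM hadd hsemi hetale m φN hφN
end

section
/- Let E be a separably closed field of characteristic p and M a finite-dimensional étale Φ-module over E. Then the map φ − 1: M → M is surjective, i.e., H^1 of the complex 0 → M →^{φ−1} M → 0 vanishes. -/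
/-!
Fix `y`. By finite dimensionality some iterate `φ^[n+1] y` is a combination `∑_{i ≤ n} cᵢ • φ^[i] y`
of the earlier ones, so it suffices to find `x = ∑_{i ≤ n} aᵢ • φ^[i] y` with `φ x = x + y`.
Comparing coefficients, this holds as soon as `a₀ + 1 = tᵖ c₀` and `a_{i+1} = aᵢᵖ + tᵖ c_{i+1}`,
where `t = aₙ`. Solving this recursion writes `aₙ = f(t)` for a polynomial `f` with `f' = 0`;
then `f - X` has derivative `-1`, hence is separable, and has a root `t` in the separably closed
field `E`.
-/

open Polynomial Finset

theorem exists_iterate_succ_eq_sum_range {R M : Type*} [Semiring R] [AddCommMonoid M] [Module R M]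
    [IsNoetherian R M] (f : M → M) (y : M) :
    ∃ (n : ℕ) (c : ℕ → R), f^[n + 1] y = ∑ i ∈ range (n + 1), c i • f^[i] y := by
  let W : ℕ →o Submodule R M :=
    ⟨fun n => Submodule.span R ((f^[·] y) '' ↑(range (n + 1))), fun m n hmn =>
      Submodule.span_mono <| Set.image_mono <| by simpa using hmn⟩
  obtain ⟨n, hn⟩ := monotone_stabilizes_iff_noetherian.mpr inferInstance W
  have hmem : f^[n + 1] y ∈ W n := by
    rw [hn (n + 1) n.le_succ]
    exact Submodule.subset_span ⟨n + 1, by simp, rfl⟩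
  obtain ⟨c, hc⟩ := (Submodule.mem_span_image_finset_iff_exists_fun' R).mp hmem
  exact ⟨n, c, hc.symm⟩

noncomputable def preimageCoeffPoly {E : Type*} [Field E] (p : ℕ) (c : ℕ → E) : ℕ → E[X]
  | 0 => C (c 0) * X ^ p - 1
  | i + 1 => preimageCoeffPoly p c i ^ p + C (c (i + 1)) * X ^ p

theorem derivative_preimageCoeffPoly {E : Type*} [Field E] (p : ℕ) [CharP E p] (c : ℕ → E) (i : ℕ) :
    derivative (preimageCoeffPoly p c i) = 0 := by
  induction i with
  | zero => simp [preimageCoeffPoly, derivative_X_pow]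
  | succ i ih => simp [preimageCoeffPoly, derivative_pow, ih]

theorem IsSepClosed.exists_eval_eq_self_of_derivative_eq_zero {E : Type*} [Field E]
    [IsSepClosed E] (f : E[X]) (hf : derivative f = 0) : ∃ t, f.eval t = t := by
  have hderiv : derivative (f - X) = -1 := by simp [hf]
  have hdeg : (f - X).degree ≠ 0 := fun h => by
    rw [eq_C_of_degree_eq_zero h] at hderiv
    simp at hderiv
  have hsep : (f - X).Separable := by
    rw [Polynomial.Separable, hderiv]
    exact ⟨0, -1, by ring⟩
  obtain ⟨t, ht⟩ := IsSepClosed.exists_root _ hdeg hsep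
  exact ⟨t, by simpa [sub_eq_zero] using ht⟩

theorem exists_sub_self_eq_of_iterate_succ_eq_sum {E M : Type*} [Field E] {p : ℕ} [CharP E p]
    [IsSepClosed E] [AddCommGroup M] [Module E M] (φ : M →+ M)
    (hsemi : ∀ (c : E) (x : M), φ (c • x) = c ^ p • φ x) {y : M} {n : ℕ} {c : ℕ → E}
    (hrel : φ^[n + 1] y = ∑ i ∈ range (n + 1), c i • φ^[i] y) :
    ∃ x, φ x - x = y := by
  obtain ⟨t, ht⟩ := IsSepClosed.exists_eval_eq_self_of_derivative_eq_zero _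
    (derivative_preimageCoeffPoly p c n)
  set a : ℕ → E := fun i => (preimageCoeffPoly p c i).eval t with ha
  have ha_zero : a 0 + 1 = t ^ p * c 0 := by
    simp only [ha, preimageCoeffPoly, eval_sub, eval_mul, eval_pow, eval_C, eval_X, eval_one,
      sub_add_cancel, mul_comm]
  have ha_succ (i : ℕ) : a i ^ p + t ^ p * c (i + 1) = a (i + 1) := by
    simp only [ha, preimageCoeffPoly, eval_add, eval_pow, eval_mul, eval_C, eval_X, mul_comm]
  have ha_last : a n = t := ht
  refine ⟨∑ i ∈ range (n + 1), a i • φ^[i] y, sub_eq_iff_eq_add'.mpr ?_⟩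
  calc φ (∑ i ∈ range (n + 1), a i • φ^[i] y)
      = ∑ i ∈ range (n + 1), a i ^ p • φ^[i + 1] y := by
        simp only [map_sum, hsemi, Function.iterate_succ_apply']
    _ = ∑ i ∈ range n, a i ^ p • φ^[i + 1] y + ∑ i ∈ range (n + 1), (t ^ p * c i) • φ^[i] y := by
        rw [sum_range_succ, ha_last, hrel, smul_sum]
        simp only [smul_smul]
    _ = ∑ i ∈ range n, a (i + 1) • φ^[i + 1] y + (a 0 + 1) • y := by
        rw [sum_range_succ' (fun i => (t ^ p * c i) • φ^[i] y), ← add_assoc, ← sum_add_distrib]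
        simp only [← add_smul, ha_succ, ha_zero, Function.iterate_zero_apply]
    _ = ∑ i ∈ range (n + 1), a i • φ^[i] y + y := by
        rw [sum_range_succ', add_smul, one_smul, Function.iterate_zero_apply, add_assoc]

theorem etale_phi_module_sub_one_surjective_of_isSepClosed_general {p : ℕ}
    (E : Type) [Field E] [CharP E p] [IsSepClosed E]
    (M : Type) [AddCommGroup M] [Module E M] [FiniteDimensional E M]
    (φ : M → M)
    (hadd : ∀ x y, φ (x + y) = φ x + φ y)
    (hsemi : ∀ (c : E) (x : M), φ (c • x) = c ^ p • φ x) :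
    Function.Surjective (fun x => φ x - x) := by
  intro y
  obtain ⟨n, c, hrel⟩ := exists_iterate_succ_eq_sum_range (R := E) φ y
  exact exists_sub_self_eq_of_iterate_succ_eq_sum (AddMonoidHom.mk' φ hadd) hsemi hrel

/-- **Vanishing of `H^1` over a separably closed field.**
Let `E` be a separably closed field of characteristic `p` and `M` a finite dimensional
étale Φ-module over `E`: an `E`-vector space with an additive `σ`-semilinear map `φ`
(`φ (c • x) = c^p • φ x`) whose image spans `M`. Then `φ − 1 : M → M` is surjective,
i.e. `H^1` of the complex `0 → M →(φ−1)→ M → 0` vanishes. -/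
theorem etale_phi_module_sub_one_surjective_of_isSepClosed {p : ℕ} [Fact p.Prime]
    (E : Type) [Field E] [CharP E p] [IsSepClosed E]
    (M : Type) [AddCommGroup M] [Module E M] [FiniteDimensional E M]
    (φ : M → M)
    (hadd : ∀ x y, φ (x + y) = φ x + φ y)
    (hsemi : ∀ (c : E) (x : M), φ (c • x) = c ^ p • φ x)
    (hetale : Submodule.span E (Set.range φ) = ⊤) :
    Function.Surjective (fun x => φ x - x) :=
  etale_phi_module_sub_one_surjective_of_isSepClosed_general E M φ hadd hsemi
end

section
/- Let C be the completion of an algebraic closure of a complete discrete valuation field K of mixed characteristic (0, p). Let R* = lim←(C_n*) where each C_n = C and transition maps are x ↦ x^p, and R = R* ∪ {0}. With componentwise multiplication, and addition defined by (x_n)+(y_n) = (z_n) where z_n = lim_m (x_{n+m}+y_{n+m})^{p^m}, R is a ring of characteristic p in which every element has a unique p-th root (i.e., R is perfect). -/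
/-!
Everything rests on one estimate, from the binomial theorem and `p ∣ p.choose k`: if `v b ≤ T`
and `v (a - b) ≤ v p * T`, then `v (a ^ p ^ m - b ^ p ^ m) ≤ v p ^ (m + 1) * T ^ p ^ m`.
Applied to `a = (x_{n+m+1} + y_{n+m+1}) ^ p` and `b = x_{n+m} + y_{n+m}`, it makes the sequence
defining `(x + y)_n` Cauchy. Applied termwise, it shows that `lim A_m ^ p ^ m` does not change
when each `A_m` is moved by at most `v p` times a bound `t_m` with `t_m ^ p ^ m` constant.
`-x + x = 0` and associativity are such moves (the latter compares `(x + y)_k + z_k` with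
`x_k + y_k + z_k`); the other ring axioms hold termwise. The entries of `(p : R)` all have valuation at most `v p < 1`, and
`v x_n = v x_{n+m} ^ p ^ m`, so `p = 0` in `R`. Frobenius is the shift of sequences, which is
bijective.
-/

open Filter

/-- The carrier of the tilt `R = lim←(C, x ↦ x^p) ∪ {0}`: sequences `(x_n)` in `C`
with `x_{n+1}^p = x_n` (the zero sequence corresponds to `0`). -/
def TiltCarrier (C : Type) [Field C] (p : ℕ) : Type :=
  {x : ℕ → C // ∀ n, (x (n + 1)) ^ p = x n}

open Finset Topology

namespace NNReal

theorem antitone_pow_succ_mul {r : NNReal} (hr : r ≤ 1) (c : NNReal) :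
    Antitone fun m : ℕ => r ^ (m + 1) * c := fun _ _ hab => by
  dsimp only
  gcongr ?_ * _
  exact pow_le_pow_right_of_le_one' hr (Nat.succ_le_succ hab)

theorem tendsto_pow_succ_mul_nhds_zero {r : NNReal} (hr : r < 1) (c : NNReal) :
    Tendsto (fun m : ℕ => r ^ (m + 1) * c) atTop (𝓝 0) := by
  simpa using ((tendsto_add_atTop_iff_nat 1).mpr
    (tendsto_pow_atTop_nhds_zero_of_lt_one hr)).mul_const c

end NNReal

namespace Valuation

section PowSubPow

variable {R : Type*} [CommRing R] (v : Valuation R NNReal) {p : ℕ} [hp : Fact p.Prime]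

theorem map_natCast_le_one (n : ℕ) : v n ≤ 1 :=
  natCast_mem v.integer n

theorem map_add_pow_sub_pow_sub_pow_le {a b : R} {s t : NNReal} (ha : v a ≤ s) (hb : v b ≤ t)
    (hst : s ≤ t) : v ((a + b) ^ p - a ^ p - b ^ p) ≤ v p * (s * t ^ (p - 1)) := by
  have hexpand : (a + b) ^ p - a ^ p - b ^ p
      = p * ∑ k ∈ Ioo 0 p, a ^ k * b ^ (p - k) * ((p.choose k / p : ℕ) : R) := by
    rw [add_pow_prime_eq' hp.out]; ring
  rw [hexpand, map_mul]
  refine mul_le_mul_right (v.map_sum_le fun k hk => ?_) _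
  obtain ⟨hk0, hkp⟩ := mem_Ioo.mp hk
  calc v (a ^ k * b ^ (p - k) * ((p.choose k / p : ℕ) : R))
      ≤ s ^ k * t ^ (p - k) * 1 := by
        rw [map_mul, map_mul, map_pow, map_pow]
        gcongr
        exact v.map_natCast_le_one _
    _ = s * (s ^ (k - 1) * t ^ (p - k)) := by
        rw [mul_one, ← mul_assoc, ← pow_succ', Nat.sub_add_cancel hk0]
    _ ≤ s * (t ^ (k - 1) * t ^ (p - k)) := by gcongr
    _ = s * t ^ (p - 1) := by rw [← pow_add]; congr 2; omega

theorem map_pow_sub_pow_le {a b : R} {T : NNReal} {k : ℕ} (hk : 1 ≤ k) (hb : v b ≤ T)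
    (hab : v (a - b) ≤ v p ^ k * T) : v (a ^ p - b ^ p) ≤ v p ^ (k + 1) * T ^ p := by
  have hp1 : v p ≤ 1 := v.map_natCast_le_one p
  have hsmall : v p ^ k * T ≤ T := mul_le_of_le_one_left' (pow_le_one' hp1 k)
  have hsplit : a ^ p - b ^ p = (a - b) ^ p + (((a - b) + b) ^ p - (a - b) ^ p - b ^ p) := by
    rw [sub_add_cancel]; ring
  rw [hsplit]
  refine v.map_add_le ?_ ?_
  · calc v ((a - b) ^ p) ≤ (v p ^ k * T) ^ p := by rw [map_pow]; gcongr
      _ = v p ^ (k * p) * T ^ p := by rw [mul_pow, ← pow_mul]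
      _ ≤ v p ^ (k + 1) * T ^ p := by
        gcongr ?_ * _
        exact pow_le_pow_of_le_one zero_le hp1 (by nlinarith [hp.out.two_le])
  · calc _ ≤ v p * (v p ^ k * T * T ^ (p - 1)) :=
          v.map_add_pow_sub_pow_sub_pow_le hab hb hsmall
      _ = v p ^ (k + 1) * T ^ p := by
        rw [pow_succ', mul_assoc, mul_assoc, ← pow_succ', Nat.sub_add_cancel hp.out.one_lt.le]

theorem map_pow_pow_sub_pow_pow_le {a b : R} {T : NNReal} (hb : v b ≤ T)
    (hab : v (a - b) ≤ v p * T) (m : ℕ) :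
    v (a ^ p ^ m - b ^ p ^ m) ≤ v p ^ (m + 1) * T ^ p ^ m := by
  induction m with
  | zero => simpa using hab
  | succ m ih =>
    have hbm : v (b ^ p ^ m) ≤ T ^ p ^ m := by rw [map_pow]; gcongr
    simpa only [pow_succ, pow_mul] using v.map_pow_sub_pow_le (Nat.le_add_left 1 m) hbm ih

end PowSubPow

section Sequence

variable {R Γ₀ : Type*} [Ring R] [LinearOrderedCommMonoidWithZero Γ₀] (v : Valuation R Γ₀)

theorem map_sub_le_of_map_sub_succ_le {f : ℕ → R} {g : ℕ → Γ₀} (hg : Antitone g)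
    (hf : ∀ m, v (f (m + 1) - f m) ≤ g m) (m k : ℕ) : v (f (m + k) - f m) ≤ g m := by
  induction k with
  | zero => simp
  | succ k ih =>
    rw [← sub_add_sub_cancel _ (f (m + k))]
    exact v.map_add_le ((hf (m + k)).trans (hg (Nat.le_add_right m k))) ih

end Sequence

end Valuation

namespace Valued

section

variable {R : Type*} [Ring R] [Valued R NNReal] {ι : Type*} {l : Filter ι}

theorem tendsto_zero_of_v_le {f : ι → R} {g : ι → NNReal} (hfg : ∀ i, v (f i) ≤ g i)
    (hg : Tendsto g l (𝓝 0)) : Tendsto f l (𝓝 0) := by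
  refine (hasBasis_nhds_zero R NNReal).tendsto_right_iff.mpr fun γ _ => ?_
  have hγ : (0 : NNReal) < MonoidWithZeroHom.ValueGroup₀.embedding γ.1 := by
    simpa using MonoidWithZeroHom.ValueGroup₀.embedding_strictMono (Units.zero_lt γ)
  filter_upwards [hg.eventually_lt_const hγ] with i hi
  exact v.restrict_lt_iff_lt_embedding.mpr ((hfg i).trans_lt hi)

theorem v_sub_le_of_tendsto [l.NeBot] {b : ι → R} {L c : R} {B : NNReal}
    (hb : Tendsto b l (𝓝 L)) (h : ∀ i, v (b i - c) ≤ B) : v (L - c) ≤ B := by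
  by_contra! hlt
  have hconst : ∀ᶠ i in l, v (b i - c) = v (L - c) :=
    (hb.sub_const c).eventually (locally_const (hlt.trans_le' zero_le).ne')
  obtain ⟨i, hi⟩ := hconst.exists
  exact (h i).not_gt (hi ▸ hlt)

theorem cauchySeq_of_v_sub_succ_le {f : ℕ → R} {g : ℕ → NNReal} (hg : Antitone g)
    (hg0 : Tendsto g atTop (𝓝 0)) (hf : ∀ m, v (f (m + 1) - f m) ≤ g m) : CauchySeq f := by
  refine (IsUniformAddGroup.cauchy_map_iff_tendsto _ _).mpr ⟨inferInstance, ?_⟩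
  refine tendsto_zero_of_v_le (g := fun q => max (g q.1) (g q.2)) (fun ⟨a, b⟩ => ?_) ?_
  · obtain hab | hba := le_total a b
    · obtain ⟨k, rfl⟩ := Nat.exists_eq_add_of_le hab
      rw [Valuation.map_sub_swap]
      exact (v.map_sub_le_of_map_sub_succ_le hg hf a k).trans (le_max_left _ _)
    · obtain ⟨k, rfl⟩ := Nat.exists_eq_add_of_le hba
      exact (v.map_sub_le_of_map_sub_succ_le hg hf b k).trans (le_max_right _ _)
  · simpa using (hg0.comp tendsto_fst).max (hg0.comp tendsto_snd)

end

theorem tendsto_pow_pow_iff_of_v_sub_le {R : Type*} [CommRing R] [Valued R NNReal] {p : ℕ}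
    [Fact p.Prime] (hp1 : v (p : R) < 1) {A B : ℕ → R} {t : ℕ → NNReal} {T : NNReal}
    (hB : ∀ m, v (B m) ≤ t m) (hAB : ∀ m, v (A m - B m) ≤ v (p : R) * t m)
    (ht : ∀ m, t m ^ p ^ m = T) {L : R} :
    Tendsto (fun m => A m ^ p ^ m) atTop (𝓝 L) ↔
      Tendsto (fun m => B m ^ p ^ m) atTop (𝓝 L) := by
  have hdiff : Tendsto (fun m => A m ^ p ^ m - B m ^ p ^ m) atTop (𝓝 0) := by
    refine tendsto_zero_of_v_le (g := fun m => v (p : R) ^ (m + 1) * T) (fun m => ?_) ?_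
    · simpa only [ht] using v.map_pow_pow_sub_pow_pow_le (hB m) (hAB m) m
    · exact NNReal.tendsto_pow_succ_mul_nhds_zero hp1 T
  exact ⟨fun hAL => by simpa using hAL.sub hdiff, fun hBL => by simpa using hBL.add hdiff⟩

end Valued

namespace TiltCarrier

variable {C : Type} [Field C] {p : ℕ}

@[ext]
theorem ext {x y : TiltCarrier C p} (h : ∀ n, x.1 n = y.1 n) : x = y :=
  Subtype.ext (funext h)

theorem apply_add_pow_pow (x : TiltCarrier C p) (n m : ℕ) : x.1 (n + m) ^ p ^ m = x.1 n := by
  induction m with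
  | zero => simp
  | succ m ih => rw [← Nat.add_assoc, pow_succ', pow_mul, x.2, ih]

-- The operations are scoped instances: global ones would take precedence over the ring structure
-- `cr` that the final theorem quantifies over.
scoped instance : One (TiltCarrier C p) := ⟨⟨fun _ => 1, fun _ => one_pow p⟩⟩

scoped instance : Mul (TiltCarrier C p) :=
  ⟨fun x y => ⟨fun n => x.1 n * y.1 n, fun n => by rw [mul_pow, x.2, y.2]⟩⟩

theorem one_apply (n : ℕ) : (1 : TiltCarrier C p).1 n = 1 := rfl

theorem mul_apply (x y : TiltCarrier C p) (n : ℕ) : (x * y).1 n = x.1 n * y.1 n := rfl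

protected theorem mul_comm (x y : TiltCarrier C p) : x * y = y * x :=
  ext fun n => mul_comm (x.1 n) (y.1 n)

section

variable [Valued C NNReal]

theorem v_apply_add_pow_pow (x : TiltCarrier C p) (n m : ℕ) :
    Valued.v (x.1 (n + m)) ^ p ^ m = Valued.v (x.1 n) := by
  rw [← map_pow, apply_add_pow_pow]

theorem max_v_apply_add_pow_pow (x y : TiltCarrier C p) (n m : ℕ) :
    max (Valued.v (x.1 (n + m))) (Valued.v (y.1 (n + m))) ^ p ^ m =
      max (Valued.v (x.1 n)) (Valued.v (y.1 n)) := by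
  rw [(pow_left_mono _).map_max, v_apply_add_pow_pow, v_apply_add_pow_pow]

end

def addApprox (x y : TiltCarrier C p) (n m : ℕ) : C := (x.1 (n + m) + y.1 (n + m)) ^ p ^ m

theorem addApprox_succ_pow (x y : TiltCarrier C p) (n m : ℕ) :
    addApprox x y (n + 1) m ^ p = addApprox x y n (m + 1) := by
  rw [addApprox, addApprox, ← pow_mul, ← pow_succ, Nat.add_right_comm, Nat.add_assoc]

variable [hp : Fact p.Prime]

scoped instance : Zero (TiltCarrier C p) := ⟨⟨fun _ => 0, fun _ => zero_pow hp.out.ne_zero⟩⟩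

theorem zero_apply (n : ℕ) : (0 : TiltCarrier C p).1 n = 0 := rfl

scoped instance : Nontrivial (TiltCarrier C p) :=
  ⟨⟨0, 1, fun h => zero_ne_one (congrArg (fun x : TiltCarrier C p => x.1 0) h)⟩⟩

variable (C p) in
/-- Fixed by `x ↦ x ^ p` and congruent to `-1` modulo `p`, so that multiplying the entries by it
is negation in the tilt. -/
def negOne : C := if p = 2 then 1 else -1

theorem negOne_pow : negOne C p ^ p = negOne C p := by
  unfold negOne
  split_ifs with h
  · exact one_pow p
  · exact (hp.out.odd_of_ne_two h).neg_one_pow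

scoped instance : Neg (TiltCarrier C p) :=
  ⟨fun x => ⟨fun n => negOne C p * x.1 n, fun n => by rw [mul_pow, negOne_pow, x.2]⟩⟩

theorem neg_apply (x : TiltCarrier C p) (n : ℕ) : (-x).1 n = negOne C p * x.1 n := rfl

variable [Valued C NNReal]

theorem v_negOne_add_one_le : Valued.v (negOne C p + 1) ≤ Valued.v (p : C) := by
  unfold negOne
  split_ifs with h
  · subst h; norm_num
  · simp

theorem v_addApprox_succ_sub_le (x y : TiltCarrier C p) (n m : ℕ) :
    Valued.v (addApprox x y n (m + 1) - addApprox x y n m) ≤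
      Valued.v (p : C) ^ (m + 1) * max (Valued.v (x.1 n)) (Valued.v (y.1 n)) := by
  set a := x.1 (n + m + 1)
  set b := y.1 (n + m + 1)
  set t := max (Valued.v a) (Valued.v b)
  have hsum : Valued.v (a ^ p + b ^ p) ≤ t ^ p := by
    refine Valued.v.map_add_le ?_ ?_ <;> rw [map_pow] <;> gcongr
    exacts [le_max_left _ _, le_max_right _ _]
  have hbinom : Valued.v ((a + b) ^ p - (a ^ p + b ^ p)) ≤ Valued.v (p : C) * t ^ p := by
    have := Valued.v.map_add_pow_sub_pow_sub_pow_le (p := p) (a := a) (b := b)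
      (le_max_left _ _) (le_max_right _ _) le_rfl
    rwa [← pow_succ', Nat.sub_add_cancel hp.out.one_le, sub_sub] at this
  have hleft : addApprox x y n (m + 1) = ((a + b) ^ p) ^ p ^ m := by
    rw [← pow_mul, ← pow_succ']; rfl
  have hright : addApprox x y n m = (a ^ p + b ^ p) ^ p ^ m := by
    rw [x.2, y.2]; rfl
  have hbound : (t ^ p) ^ p ^ m = max (Valued.v (x.1 n)) (Valued.v (y.1 n)) := by
    rw [← pow_mul, ← pow_succ', ← max_v_apply_add_pow_pow x y n (m + 1)]; rfl
  rw [hleft, hright, ← hbound]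
  exact Valued.v.map_pow_pow_sub_pow_pow_le hsum hbinom m

theorem eq_zero_of_v_apply_le {x : TiltCarrier C p} {c : NNReal} (hc : c < 1)
    (h : ∀ n, Valued.v (x.1 n) ≤ c) : x = 0 := by
  refine ext fun n =>
    (Valuation.zero_iff (Valued.v : Valuation C NNReal)).mp (le_antisymm ?_ zero_le)
  refine ge_of_tendsto' (NNReal.tendsto_pow_atTop_nhds_zero_of_lt_one hc) fun m => ?_
  rw [← v_apply_add_pow_pow x n m]
  exact (pow_le_pow_left' (h _) _).trans
    (pow_le_pow_right_of_le_one' hc.le (Nat.lt_pow_self hp.out.one_lt).le)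

variable [hp1 : Fact (Valued.v (p : C) < 1)]

theorem cauchySeq_addApprox (x y : TiltCarrier C p) (n : ℕ) : CauchySeq (addApprox x y n) :=
  Valued.cauchySeq_of_v_sub_succ_le (NNReal.antitone_pow_succ_mul hp1.out.le _)
    (NNReal.tendsto_pow_succ_mul_nhds_zero hp1.out _) (v_addApprox_succ_sub_le x y n)

theorem tendsto_pow_pow_iff_tendsto_add_add_apply (x y z : TiltCarrier C p) (n : ℕ)
    {A : ℕ → C} (hA : ∀ m, Valued.v (A m - (x.1 (n + m) + y.1 (n + m) + z.1 (n + m))) ≤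
      Valued.v (p : C) *
        max (max (Valued.v (x.1 (n + m))) (Valued.v (y.1 (n + m)))) (Valued.v (z.1 (n + m))))
    {L : C} :
    Tendsto (fun m => A m ^ p ^ m) atTop (𝓝 L) ↔
      Tendsto (fun m => (x.1 (n + m) + y.1 (n + m) + z.1 (n + m)) ^ p ^ m) atTop (𝓝 L) := by
  refine Valued.tendsto_pow_pow_iff_of_v_sub_le hp1.out (fun m => ?_) hA (fun m => ?_)
    (T := max (max (Valued.v (x.1 n)) (Valued.v (y.1 n))) (Valued.v (z.1 n)))
  · exact Valued.v.map_add_le (Valued.v.map_add_le (le_max_of_le_left (le_max_left _ _))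
      (le_max_of_le_left (le_max_right _ _))) (le_max_right _ _)
  · rw [(pow_left_mono _).map_max, max_v_apply_add_pow_pow, v_apply_add_pow_pow]

variable [CompleteSpace C]

theorem limUnder_addApprox_succ_pow (x y : TiltCarrier C p) (n : ℕ) :
    limUnder atTop (addApprox x y (n + 1)) ^ p = limUnder atTop (addApprox x y n) := by
  refine tendsto_nhds_unique ?_
    ((tendsto_add_atTop_iff_nat 1).mpr (cauchySeq_addApprox x y n).tendsto_limUnder)
  simpa only [addApprox_succ_pow] using (cauchySeq_addApprox x y (n + 1)).tendsto_limUnder.pow p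

noncomputable scoped instance : Add (TiltCarrier C p) :=
  ⟨fun x y => ⟨fun n => limUnder atTop (addApprox x y n), limUnder_addApprox_succ_pow x y⟩⟩

theorem tendsto_addApprox (x y : TiltCarrier C p) (n : ℕ) :
    Tendsto (addApprox x y n) atTop (𝓝 ((x + y).1 n)) :=
  (cauchySeq_addApprox x y n).tendsto_limUnder

theorem add_apply_eq_of_tendsto {x y : TiltCarrier C p} {n : ℕ} {L : C}
    (h : Tendsto (addApprox x y n) atTop (𝓝 L)) : (x + y).1 n = L :=
  tendsto_nhds_unique (tendsto_addApprox x y n) h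

theorem v_add_apply_sub_le (x y : TiltCarrier C p) (n : ℕ) :
    Valued.v ((x + y).1 n - (x.1 n + y.1 n)) ≤
      Valued.v (p : C) * max (Valued.v (x.1 n)) (Valued.v (y.1 n)) := by
  refine Valued.v_sub_le_of_tendsto (tendsto_addApprox x y n) fun m => ?_
  simpa [addApprox] using Valued.v.map_sub_le_of_map_sub_succ_le
    (NNReal.antitone_pow_succ_mul hp1.out.le _) (v_addApprox_succ_sub_le x y n) 0 m

protected theorem add_comm (x y : TiltCarrier C p) : x + y = y + x :=
  ext fun n => add_apply_eq_of_tendsto <| (tendsto_addApprox y x n).congr fun m => by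
    rw [addApprox, addApprox, add_comm]

protected theorem zero_add (x : TiltCarrier C p) : 0 + x = x :=
  ext fun n => add_apply_eq_of_tendsto <| tendsto_const_nhds.congr fun m => by
    rw [addApprox, zero_apply, zero_add, apply_add_pow_pow]

protected theorem neg_add_cancel (x : TiltCarrier C p) : -x + x = 0 := by
  refine ext fun n => add_apply_eq_of_tendsto ?_
  refine (Valued.tendsto_pow_pow_iff_of_v_sub_le hp1.out (B := fun _ => 0)
    (t := fun m => Valued.v (x.1 (n + m))) (fun _ => by simp) (fun m => ?_)
    (v_apply_add_pow_pow x n)).mpr ?_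
  · rw [sub_zero, neg_apply, ← add_one_mul, map_mul]
    exact mul_le_mul_left v_negOne_add_one_le _
  · simp [zero_pow (pow_ne_zero _ hp.out.ne_zero), zero_apply]

protected theorem left_distrib (x y z : TiltCarrier C p) : x * (y + z) = x * y + x * z := by
  refine ext fun n => (add_apply_eq_of_tendsto ?_).symm
  refine ((tendsto_addApprox y z n).const_mul (x.1 n)).congr fun m => ?_
  rw [addApprox, addApprox, mul_apply, mul_apply, ← mul_add, mul_pow, apply_add_pow_pow]

protected theorem add_assoc (x y z : TiltCarrier C p) : x + y + z = x + (y + z) := by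
  refine ext fun n => tendsto_nhds_unique (l := atTop)
    (f := fun m => (x.1 (n + m) + y.1 (n + m) + z.1 (n + m)) ^ p ^ m) ?_ ?_
  · refine (tendsto_pow_pow_iff_tendsto_add_add_apply x y z n fun m => ?_).mp
      (tendsto_addApprox (x + y) z n)
    rw [add_sub_add_right_eq_sub]
    exact (v_add_apply_sub_le x y _).trans (mul_le_mul_right (le_max_left _ _) _)
  · refine (tendsto_pow_pow_iff_tendsto_add_add_apply x y z n fun m => ?_).mp
      (tendsto_addApprox x (y + z) n)
    rw [add_assoc, add_sub_add_left_eq_sub]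
    exact (v_add_apply_sub_le y z _).trans (mul_le_mul_right
      (max_le (le_max_of_le_left (le_max_right _ _)) (le_max_right _ _)) _)

noncomputable scoped instance commRing : CommRing (TiltCarrier C p) where
  add_assoc := TiltCarrier.add_assoc
  zero_add := TiltCarrier.zero_add
  add_zero x := (TiltCarrier.add_comm x 0).trans (TiltCarrier.zero_add x)
  add_comm := TiltCarrier.add_comm
  neg_add_cancel := TiltCarrier.neg_add_cancel
  nsmul := nsmulRec
  zsmul := zsmulRec
  left_distrib := TiltCarrier.left_distrib
  right_distrib x y z := by
    rw [TiltCarrier.mul_comm, TiltCarrier.left_distrib, TiltCarrier.mul_comm z,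
      TiltCarrier.mul_comm z]
  mul_assoc x y z := ext fun n => mul_assoc (x.1 n) (y.1 n) (z.1 n)
  one_mul x := ext fun n => one_mul (x.1 n)
  mul_one x := ext fun n => mul_one (x.1 n)
  zero_mul x := ext fun n => zero_mul (x.1 n)
  mul_zero x := ext fun n => mul_zero (x.1 n)
  mul_comm := TiltCarrier.mul_comm

theorem v_natCast_apply_sub_le (k n : ℕ) :
    Valued.v ((k : TiltCarrier C p).1 n - k) ≤ Valued.v (p : C) := by
  induction k with
  | zero => simp [zero_apply]
  | succ k ih =>
    have hk : Valued.v ((k : TiltCarrier C p).1 n) ≤ 1 := by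
      rw [← sub_add_cancel ((k : TiltCarrier C p).1 n) k]
      exact Valued.v.map_add_le (ih.trans hp1.out.le) (Valued.v.map_natCast_le_one k)
    rw [Nat.cast_succ, Nat.cast_succ, ← sub_add_sub_cancel _ ((k : TiltCarrier C p).1 n + 1)]
    refine Valued.v.map_add_le ((v_add_apply_sub_le _ 1 n).trans ?_) ?_
    · rw [one_apply, map_one, max_eq_right hk, mul_one]
    · rwa [add_sub_add_right_eq_sub]

theorem natCast_self_eq_zero : (p : TiltCarrier C p) = 0 :=
  eq_zero_of_v_apply_le hp1.out fun n => by
    simpa using Valued.v.map_add_le (v_natCast_apply_sub_le (C := C) (p := p) p n) le_rfl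

scoped instance charP : CharP (TiltCarrier C p) p :=
  (CharP.charP_iff_prime_eq_zero hp.out).mpr natCast_self_eq_zero

theorem pow_apply (x : TiltCarrier C p) (k n : ℕ) : (x ^ k).1 n = x.1 n ^ k := by
  induction k with
  | zero => rw [pow_zero, pow_zero]; rfl
  | succ k ih => rw [pow_succ, mul_apply, ih, pow_succ]

scoped instance perfectRing : PerfectRing (TiltCarrier C p) p where
  bijective_frobenius := Function.bijective_iff_has_inverse.mpr
    ⟨fun x => ⟨fun n => x.1 (n + 1), fun n => x.2 (n + 1)⟩,
      fun y => ext fun n => (pow_apply y p (n + 1)).trans (y.2 n),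
      fun x => ext fun n => (pow_apply _ p n).trans (x.2 n)⟩

end TiltCarrier

theorem tilt_commRing_charP_perfect_general (p : ℕ) [Fact p.Prime]
    (C : Type) [Field C] [Valued C NNReal] [CompleteSpace C]
    (hp1 : Valued.v (p : C) < 1) :
    ∃ cr : CommRing (TiltCarrier C p), letI := cr;
      (∀ x y : TiltCarrier C p, ∀ n : ℕ,
        Tendsto (fun m : ℕ => (x.1 (n + m) + y.1 (n + m)) ^ p ^ m) atTop
          (nhds ((x + y).1 n))) ∧
      (∀ x y : TiltCarrier C p, ∀ n : ℕ, (x * y).1 n = x.1 n * y.1 n) ∧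
      CharP (TiltCarrier C p) p ∧
      (∀ x : TiltCarrier C p, ∃! y : TiltCarrier C p, y ^ p = x) := by
  have : Fact (Valued.v (p : C) < 1) := ⟨hp1⟩
  exact ⟨TiltCarrier.commRing, TiltCarrier.tendsto_addApprox, TiltCarrier.mul_apply,
    TiltCarrier.charP, TiltCarrier.perfectRing.bijective_frobenius.existsUnique⟩

/-- **The tilt is a perfect ring of characteristic `p`.**
Let `C` be the completion of an algebraic closure of a complete discrete valuation field
of mixed characteristic `(0,p)`: a complete algebraically closed valued field of
characteristic `0` with `0 < v(p) < 1`. Let `R* = lim← C*` along `x ↦ x^p`, and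
`R = R* ∪ {0}`, realized as sequences `(x_n)` with `x_{n+1}^p = x_n`. Then `R` carries
a commutative ring structure with componentwise multiplication and with addition
`(x_n)+(y_n) = (z_n)`, `z_n = lim_m (x_{n+m}+y_{n+m})^{p^m}`, it has characteristic `p`,
and every element of `R` has a unique `p`-th root (`R` is perfect). -/
theorem tilt_commRing_charP_perfect (p : ℕ) [Fact p.Prime]
    (C : Type) [Field C] [Valued C NNReal] [CompleteSpace C] [IsAlgClosed C] [CharZero C]
    (hp1 : Valued.v (p : C) < 1) (hp0 : Valued.v (p : C) ≠ 0) :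
    ∃ cr : CommRing (TiltCarrier C p), letI := cr;
      (∀ x y : TiltCarrier C p, ∀ n : ℕ,
        Tendsto (fun m : ℕ => (x.1 (n + m) + y.1 (n + m)) ^ p ^ m) atTop
          (nhds ((x + y).1 n))) ∧
      (∀ x y : TiltCarrier C p, ∀ n : ℕ, (x * y).1 n = x.1 n * y.1 n) ∧
      CharP (TiltCarrier C p) p ∧
      (∀ x : TiltCarrier C p, ∃! y : TiltCarrier C p, y ^ p = x) :=
  tilt_commRing_charP_perfect_general p C hp1
end

section
/- Let M be a module over Z_p[[T]] with three commuting-up-to-relation operators: f (= φ−1), and group elements γ, γ' acting with γγ'γ^{−1} = (γ')^a, φ commuting with γ and γ'. Set δ = ((γ')^a−1)(γ'−1)^{−1} ∈ Z_p[[γ'−1]]. Then the sequence of maps A_0 = (φ−1, γ−1, γ'−1)^T : M → M^3, A_1 : M^3 → M^3 given by the matrix [[γ−1, 1−φ, 0],[γ'−1, 0, 1−φ],[0, (γ')^a−1, δ−γ]], and A_2 = ((γ')^a−1, δ−γ, φ−1) : M^3 → M satisfy A_1 ∘ A_0 = 0 and A_2 ∘ A_1 = 0, so 0 → M → M^3 →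 M^3 → M → 0 is a complex. -/
/-- **The Benois complex `C_3(M)` is a complex.**
Let `M` be an abelian group with additive endomorphisms `φ`, `γ`, `γ'`, `γ'ᵃ` and `δ`
(the latter two corresponding to `(γ')^a` and `δ = ((γ')^a−1)(γ'−1)^{−1}` in the
Iwasawa algebra `ℤ_p[[γ'−1]]`), satisfying: `φ` commutes with `γ`, `γ'`, `γ'ᵃ` and `δ`;
`γγ' = (γ')^a γ`; and `δ(γ'−1) = (γ')^a − 1`. Then with
`A₀ = (φ−1, γ−1, γ'−1)ᵀ : M → M³`,
`A₁ = [[γ−1, 1−φ, 0], [γ'−1, 0, 1−φ], [0, (γ')^a−1, δ−γ]] : M³ → M³` and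
`A₂ = ((γ')^a−1, δ−γ, φ−1) : M³ → M`, one has `A₁ ∘ A₀ = 0` and `A₂ ∘ A₁ = 0`,
so `0 → M → M³ → M³ → M → 0` is a complex. -/
theorem benois_complex_C3 (M : Type) [AddCommGroup M]
    (φ γ γ' γ'a δ : M →+ M)
    (hφγ : ∀ x, φ (γ x) = γ (φ x))
    (hφγ' : ∀ x, φ (γ' x) = γ' (φ x))
    (hφγ'a : ∀ x, φ (γ'a x) = γ'a (φ x))
    (hφδ : ∀ x, φ (δ x) = δ (φ x))
    (hrel : ∀ x, γ (γ' x) = γ'a (γ x))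
    (hδ : ∀ x, δ (γ' x) - δ x = γ'a x - x)
    (A0 : M → M × M × M)
    (hA0 : A0 = fun x => (φ x - x, γ x - x, γ' x - x))
    (A1 : M × M × M → M × M × M)
    (hA1 : A1 = fun v =>
      (γ v.1 - v.1 + (v.2.1 - φ v.2.1),
       γ' v.1 - v.1 + (v.2.2 - φ v.2.2),
       (γ'a v.2.1 - v.2.1) + (δ v.2.2 - γ v.2.2)))
    (A2 : M × M × M → M)
    (hA2 : A2 = fun v => (γ'a v.1 - v.1) + (δ v.2.1 - γ v.2.1) + (φ v.2.2 - v.2.2)) :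
    (∀ x : M, A1 (A0 x) = 0) ∧ (∀ v : M × M × M, A2 (A1 v) = 0) := by
  subst hA0 hA1 hA2
  have hδ' : ∀ x, δ (γ' x) = γ'a x - x + δ x := fun x => by
    rw [← hδ x]; abel
  constructor
  · intro x
    simp only [map_sub, map_add, hφγ, hφγ', hrel, hδ', Prod.mk_eq_zero]
    refine ⟨by abel, by abel, by abel⟩
  · intro v
    simp only [map_sub, map_add, hφγ, hφγ', hφγ'a, hφδ, hrel, hδ']
    abel
end
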